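/- arXiv:1505.04614 — 2 statements merged into one kernel-verified Lean document; each statement's English description precedes it below -/
import Mathlib

section
/- Let α ∈ (0,1]. There exists a constant C > 0 depending only on α such that for every z ∈ ℝ³, every r > 0 and every x in the closed ball of center z and radius r, ∫_{B(z,r)} ‖t−z‖^{α−1} · ‖t−x‖^{−1} dt ≤ C r^{1+α}, where B(z,r) is the open ball of center z and radius r in ℝ³ and the integral is with respect to Lebesgue measure. -/
/-!
Since `α - 1 ≤ 0`, comparing `‖t - z‖` with `‖t - x‖` gives the pointwise bound
`‖t - z‖^(α-1) ‖t - x‖⁻¹ ≤ ‖t - z‖^(α-2) + ‖t - x‖^(α-2)`. The kernel `‖t - c‖^(α-2)` is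
integrable near `c` in `ℝ³` because `α - 2 > -3`, and by translation and scaling its integral
over `B(c, R)` is `R^(1+α)` times its integral over the unit ball. As `B(z, r) ⊆ B(x, 2r)`,
both terms are `O(r^(1+α))`.
-/

open MeasureTheory Metric Module

lemma rpow_mul_inv_le_rpow_sub_one_add {p a b : ℝ} (hp : p ≤ 0) (ha : 0 < a) (hb : 0 < b) :
    a ^ p * b⁻¹ ≤ a ^ (p - 1) + b ^ (p - 1) := by
  have hdiag (c : ℝ) (hc : 0 < c) : c ^ p * c⁻¹ = c ^ (p - 1) := by
    rw [Real.rpow_sub_one hc.ne', div_eq_mul_inv]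
  rcases le_total a b with hab | hba
  · calc a ^ p * b⁻¹ ≤ a ^ p * a⁻¹ := by gcongr
      _ ≤ a ^ (p - 1) + b ^ (p - 1) := by
          rw [hdiag a ha]; exact le_add_of_nonneg_right (by positivity)
  · calc a ^ p * b⁻¹ ≤ b ^ p * b⁻¹ :=
          mul_le_mul_of_nonneg_right (Real.rpow_le_rpow_of_nonpos hb hba hp) (by positivity)
      _ ≤ a ^ (p - 1) + b ^ (p - 1) := by
          rw [hdiag b hb]; exact le_add_of_nonneg_left (by positivity)

lemma preimage_sub_right_ball {E : Type*} [SeminormedAddCommGroup E] (c : E) (R : ℝ) :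
    (· - c) ⁻¹' ball (0 : E) R = ball c R := by
  ext t
  simp [dist_eq_norm]

section HaarMeasure

variable {E : Type*} [NormedAddCommGroup E] [NormedSpace ℝ E] [FiniteDimensional ℝ E]
  [MeasurableSpace E] [BorelSpace E] (μ : Measure E) [μ.IsAddHaarMeasure]

lemma integrableOn_ball_norm_sub_rpow [Nontrivial E] {s : ℝ} (hs : -(finrank ℝ E : ℝ) < s)
    (c : E) (R : ℝ) : IntegrableOn (fun t ↦ ‖t - c‖ ^ s) (ball c R) μ := by
  have hzero : IntegrableOn (fun t : E ↦ ‖t‖ ^ s) (ball 0 R) μ :=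
    integrableOn_ball_of_norm_le_rpow (C := 1) (α := -s) finrank_pos (by linarith)
      (.of_forall fun t ↦ by simp [abs_of_nonneg (Real.rpow_nonneg (norm_nonneg t) s)])
      (continuous_norm.measurable.pow_const s).aestronglyMeasurable
  rw [← preimage_sub_right_ball]
  exact ((measurePreserving_sub_right μ c).integrableOn_comp_preimage
    (Homeomorph.subRight c).measurableEmbedding).2 hzero

lemma setIntegral_ball_norm_sub_rpow (s : ℝ) (c : E) {R : ℝ} (hR : 0 < R) :
    ∫ t in ball c R, ‖t - c‖ ^ s ∂μ = R ^ (s + finrank ℝ E) * ∫ t in ball 0 1, ‖t‖ ^ s ∂μ := by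
  have translate : ∫ t in ball c R, ‖t - c‖ ^ s ∂μ = ∫ t in ball 0 R, ‖t‖ ^ s ∂μ := by
    rw [← preimage_sub_right_ball]
    exact (measurePreserving_sub_right μ c).setIntegral_preimage_emb
      (Homeomorph.subRight c).measurableEmbedding (fun t ↦ ‖t‖ ^ s) (ball 0 R)
  have homogeneous :
      ∫ t in ball (0 : E) 1, ‖R • t‖ ^ s ∂μ = R ^ s * ∫ t in ball 0 1, ‖t‖ ^ s ∂μ := by
    rw [← integral_const_mul]
    congr 1 with t
    rw [norm_smul, Real.norm_of_nonneg hR.le, Real.mul_rpow hR.le (norm_nonneg t)]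
  have scale := Measure.setIntegral_comp_smul_of_pos μ (fun t : E ↦ ‖t‖ ^ s) (ball 0 1) hR
  rw [smul_unitBall_of_pos hR, homogeneous, smul_eq_mul] at scale
  rw [translate, Real.rpow_add hR, Real.rpow_natCast, mul_comm (R ^ s), mul_assoc, scale]
  field_simp

lemma setIntegral_ball_rpow_mul_inv_le [Nontrivial E] {p : ℝ} (hp : p ≤ 0)
    (hpd : -(finrank ℝ E : ℝ) < p - 1) {z x : E} {r : ℝ} (hr : 0 < r) (hx : x ∈ closedBall z r) :
    ∫ t in ball z r, ‖t - z‖ ^ p * ‖t - x‖⁻¹ ∂μ ≤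
      (1 + 2 ^ (p - 1 + finrank ℝ E)) * (∫ t in ball 0 1, ‖t‖ ^ (p - 1) ∂μ) *
        r ^ (p - 1 + finrank ℝ E) := by
  have hint (c : E) (R : ℝ) := integrableOn_ball_norm_sub_rpow μ hpd c R
  have hsub : ball z r ⊆ ball x (2 * r) :=
    ball_subset_ball' (by linarith [dist_comm z x, mem_closedBall.1 hx])
  have hpointwise : ∀ᵐ t ∂μ.restrict (ball z r),
      ‖t - z‖ ^ p * ‖t - x‖⁻¹ ≤ ‖t - z‖ ^ (p - 1) + ‖t - x‖ ^ (p - 1) := by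
    filter_upwards [ae_restrict_of_ae (μ.ae_ne z), ae_restrict_of_ae (μ.ae_ne x)] with t htz htx
    exact rpow_mul_inv_le_rpow_sub_one_add hp
      (norm_pos_iff.2 (sub_ne_zero.2 htz)) (norm_pos_iff.2 (sub_ne_zero.2 htx))
  calc ∫ t in ball z r, ‖t - z‖ ^ p * ‖t - x‖⁻¹ ∂μ
      ≤ ∫ t in ball z r, (‖t - z‖ ^ (p - 1) + ‖t - x‖ ^ (p - 1)) ∂μ :=
        integral_mono_of_nonneg (.of_forall fun t ↦ by positivity)
          ((hint z r).add ((hint x _).mono_set hsub)) hpointwise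
    _ = (∫ t in ball z r, ‖t - z‖ ^ (p - 1) ∂μ) + ∫ t in ball z r, ‖t - x‖ ^ (p - 1) ∂μ :=
        integral_add (hint z r) ((hint x _).mono_set hsub)
    _ ≤ (∫ t in ball z r, ‖t - z‖ ^ (p - 1) ∂μ) + ∫ t in ball x (2 * r), ‖t - x‖ ^ (p - 1) ∂μ :=
        add_le_add le_rfl (setIntegral_mono_set (hint x _)
          (.of_forall fun t ↦ by positivity) hsub.eventuallyLE)
    _ = _ := by
        rw [setIntegral_ball_norm_sub_rpow μ _ z hr,
          setIntegral_ball_norm_sub_rpow μ _ x (by positivity), Real.mul_rpow zero_le_two hr.le]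
        ring

end HaarMeasure

/-- Volume-potential estimate: for `α ∈ (0,1]` there is `C > 0` such that for every ball
`B(z,r)` and every `x` in the closed ball of center `z` and radius `r`,
`∫_{B(z,r)} ‖t−z‖^{α−1} ‖t−x‖⁻¹ dt ≤ C r^{1+α}`. -/
theorem volume_potential_estimate
    (α : ℝ) (hα0 : 0 < α) (hα1 : α ≤ 1) :
    ∃ C > (0 : ℝ), ∀ (z : EuclideanSpace ℝ (Fin 3)) (r : ℝ), 0 < r →
      ∀ x ∈ Metric.closedBall z r,
        ∫ t in Metric.ball z r, ‖t - z‖ ^ (α - 1) * ‖t - x‖⁻¹ ≤ C * r ^ (1 + α) := by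
  set K := ∫ t in ball (0 : EuclideanSpace ℝ (Fin 3)) 1, ‖t‖ ^ (α - 1 - 1)
  have hK : 0 ≤ K := setIntegral_nonneg measurableSet_ball fun t _ ↦ by positivity
  have hdim : (finrank ℝ (EuclideanSpace ℝ (Fin 3)) : ℝ) = 3 := by simp
  have hexp : α - 1 - 1 + 3 = 1 + α := by ring
  refine ⟨(1 + 2 ^ (1 + α)) * K + 1, by positivity, fun z r hr x hx ↦ ?_⟩
  calc ∫ t in ball z r, ‖t - z‖ ^ (α - 1) * ‖t - x‖⁻¹
      ≤ (1 + 2 ^ (1 + α)) * K * r ^ (1 + α) := by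
        simpa only [hdim, hexp] using setIntegral_ball_rpow_mul_inv_le volume
          (by linarith : α - 1 ≤ 0) (by rw [hdim]; linarith) hr hx
    _ ≤ ((1 + 2 ^ (1 + α)) * K + 1) * r ^ (1 + α) := by
        gcongr
        linarith
end

section
/- Let κ ≥ 0, let Ω ⊂ ℝ³ be a bounded measurable set, and let f : ℝ³ → ℂ be a bounded measurable function vanishing outside Ω. Define u(x) := ∫_Ω f(z) · e^{iκ‖x−z‖}/(4π‖x−z‖) dz for x ∈ ℝ³. Then there exists a constant C > 0 depending only on κ and Ω (not on f) such that for all x, y ∈ ℝ³, |u(x) − u(y)| ≤ C · (sup_{z} |f(z)|) · ‖x−y‖. -/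
/-!
The kernel `Φ(r) = e^{iκr}/(4πr)` satisfies `|Φ a - Φ b| ≤ (4π)⁻¹ (|κ|/a + 1/(ab)) |a - b|`.
With `a = ‖x - z‖`, `b = ‖y - z‖`, the triangle inequality `|a - b| ≤ ‖x - y‖` and
`1/(ab) ≤ (a⁻² + b⁻²)/2`, the difference of the two integrands is at most `(4π)⁻¹ B ‖x - y‖`
times `|κ| ‖x - z‖⁻¹ + (‖x - z‖⁻² + ‖y - z‖⁻²)/2`. In dimension `d ≥ 3` the integrals of
`‖x - ·‖⁻ⁿ` (`n < d`) over a set of finite measure are bounded uniformly in `x`, because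
`‖v‖⁻ⁿ ≤ 1_{B(0,1)}(v) ‖v‖⁻ⁿ + 1` and the integral of the first term over the whole space
does not depend on the translation by `x`.
-/

open MeasureTheory Complex Real Metric

noncomputable def helmholtzKernel (κ r : ℝ) : ℂ :=
  exp (I * κ * r) / ((4 * π * r : ℝ) : ℂ)

lemma norm_exp_I_mul_sub_exp_I_mul_le (s t : ℝ) :
    ‖exp (I * s) - exp (I * t)‖ ≤ |s - t| := by
  have h : exp (I * s) - exp (I * t) = exp (I * t) * (exp (I * ↑(s - t)) - 1) := by
    rw [mul_sub, ← Complex.exp_add]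
    push_cast
    ring_nf
  rw [h, norm_mul, norm_exp_I_mul_ofReal, one_mul]
  exact Real.norm_exp_I_mul_ofReal_sub_one_le

lemma norm_exp_I_mul_mul (κ r : ℝ) : ‖exp (I * κ * r)‖ = 1 := by
  rw [mul_assoc, ← ofReal_mul, norm_exp_I_mul_ofReal]

lemma norm_helmholtzKernel (κ r : ℝ) : ‖helmholtzKernel κ r‖ = (4 * π * |r|)⁻¹ := by
  rw [helmholtzKernel, norm_div, norm_exp_I_mul_mul, norm_real, Real.norm_eq_abs, abs_mul,
    abs_of_pos (by positivity : (0 : ℝ) < 4 * π), one_div]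

lemma measurable_helmholtzKernel (κ : ℝ) : Measurable (helmholtzKernel κ) := by
  unfold helmholtzKernel
  fun_prop

lemma norm_helmholtzKernel_sub_le (κ : ℝ) {a b : ℝ} (ha : 0 < a) (hb : 0 < b) :
    ‖helmholtzKernel κ a - helmholtzKernel κ b‖ ≤
      (4 * π)⁻¹ * (|κ| * a⁻¹ + a⁻¹ * b⁻¹) * |a - b| := by
  have hexp : ‖exp (I * κ * a) - exp (I * κ * b)‖ ≤ |κ| * |a - b| := by
    simpa only [mul_assoc, ← ofReal_mul, ← mul_sub, abs_mul] using
      norm_exp_I_mul_sub_exp_I_mul_le (κ * a) (κ * b)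
  have ha' : (a : ℂ) ≠ 0 := ofReal_ne_zero.2 ha.ne'
  have hb' : (b : ℂ) ≠ 0 := ofReal_ne_zero.2 hb.ne'
  have hsplit : helmholtzKernel κ a - helmholtzKernel κ b =
      ((exp (I * κ * a) - exp (I * κ * b)) * b + exp (I * κ * b) * ↑(b - a)) /
        ↑(4 * π * a * b) := by
    simp only [helmholtzKernel]
    push_cast
    field_simp
    ring
  have hnum : ‖(exp (I * κ * a) - exp (I * κ * b)) * b + exp (I * κ * b) * ↑(b - a)‖ ≤
      (|κ| * b + 1) * |a - b| := by
    refine (norm_add_le _ _).trans ?_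
    rw [norm_mul, norm_mul, norm_exp_I_mul_mul, norm_real, norm_real, Real.norm_of_nonneg hb.le,
      Real.norm_eq_abs, abs_sub_comm]
    nlinarith
  rw [hsplit, norm_div, norm_real, Real.norm_of_nonneg (by positivity),
    div_le_iff₀ (by positivity)]
  refine hnum.trans (le_of_eq ?_)
  field_simp

lemma norm_helmholtzKernel_sub_le_of_ne {E : Type*} [NormedAddCommGroup E] (κ : ℝ) {x y z : E}
    (hx : z ≠ x) (hy : z ≠ y) :
    ‖helmholtzKernel κ ‖x - z‖ - helmholtzKernel κ ‖y - z‖‖ ≤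
      (4 * π)⁻¹ * (|κ| * ‖x - z‖⁻¹ + (‖x - z‖⁻¹ ^ 2 + ‖y - z‖⁻¹ ^ 2) / 2) * ‖x - y‖ := by
  have hamgm : ‖x - z‖⁻¹ * ‖y - z‖⁻¹ ≤ (‖x - z‖⁻¹ ^ 2 + ‖y - z‖⁻¹ ^ 2) / 2 := by
    linarith [two_mul_le_add_sq ‖x - z‖⁻¹ ‖y - z‖⁻¹]
  have hdist : |‖x - z‖ - ‖y - z‖| ≤ ‖x - y‖ := by
    simpa only [sub_sub_sub_cancel_right] using abs_norm_sub_norm_le (x - z) (y - z)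
  grw [norm_helmholtzKernel_sub_le κ (norm_pos_iff.2 (sub_ne_zero.2 hx.symm))
    (norm_pos_iff.2 (sub_ne_zero.2 hy.symm)), hamgm, hdist]

lemma inv_norm_pow_le_indicator_ball_add_one {E : Type*} [SeminormedAddCommGroup E] (n : ℕ)
    (v : E) : ‖v‖⁻¹ ^ n ≤ (ball 0 1).indicator (fun w : E => ‖w‖⁻¹ ^ n) v + 1 := by
  by_cases hv : v ∈ ball (0 : E) 1
  · rw [Set.indicator_of_mem hv]
    exact le_add_of_nonneg_right zero_le_one
  · rw [Set.indicator_of_notMem hv, zero_add]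
    have hv1 : 1 ≤ ‖v‖ := by simpa using hv
    exact pow_le_one₀ (by positivity) (inv_le_one_of_one_le₀ hv1)

variable {E : Type*} [NormedAddCommGroup E] [NormedSpace ℝ E] [FiniteDimensional ℝ E]
  [MeasurableSpace E] [BorelSpace E] {μ : Measure E} [μ.IsAddHaarMeasure] {Ω : Set E}

section InversePower

variable {n : ℕ}

lemma integrable_indicator_ball_inv_norm_pow (hn : n < Module.finrank ℝ E) :
    Integrable ((ball 0 1).indicator (fun v : E => ‖v‖⁻¹ ^ n)) μ := by
  refine (integrable_indicator_iff measurableSet_ball).2 ?_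
  refine integrableOn_ball_of_norm_le_rpow (C := 1) (α := n) (by omega) (by exact_mod_cast hn)
    (ae_of_all _ fun v => ?_) (by fun_prop)
  rw [one_mul, Real.rpow_neg (norm_nonneg v), Real.rpow_natCast, inv_pow,
    Real.norm_of_nonneg (by positivity)]

lemma integrableOn_inv_norm_sub_pow (hn : n < Module.finrank ℝ E) (hΩ : μ Ω ≠ ⊤) (x : E) :
    IntegrableOn (fun z => ‖x - z‖⁻¹ ^ n) Ω μ := by
  refine Integrable.mono'
    (((integrable_indicator_ball_inv_norm_pow hn).comp_sub_left x).integrableOn.add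
      (integrableOn_const (C := (1 : ℝ)) hΩ)) (by fun_prop) (ae_of_all _ fun z => ?_)
  rw [Real.norm_of_nonneg (by positivity)]
  exact inv_norm_pow_le_indicator_ball_add_one n (x - z)

lemma setIntegral_inv_norm_sub_pow_le (hn : n < Module.finrank ℝ E) (hΩ : μ Ω ≠ ⊤) (x : E) :
    ∫ z in Ω, ‖x - z‖⁻¹ ^ n ∂μ ≤ ∫ v in ball 0 1, ‖v‖⁻¹ ^ n ∂μ + μ.real Ω := by
  have hind := (integrable_indicator_ball_inv_norm_pow (μ := μ) hn).comp_sub_left x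
  have hone := integrableOn_const (C := (1 : ℝ)) hΩ
  calc ∫ z in Ω, ‖x - z‖⁻¹ ^ n ∂μ
      ≤ ∫ z in Ω, ((ball 0 1).indicator (fun v : E => ‖v‖⁻¹ ^ n) (x - z) + 1) ∂μ :=
        setIntegral_mono (integrableOn_inv_norm_sub_pow hn hΩ x) (hind.integrableOn.add hone)
          fun z => inv_norm_pow_le_indicator_ball_add_one n (x - z)
    _ = ∫ z in Ω, (ball 0 1).indicator (fun v : E => ‖v‖⁻¹ ^ n) (x - z) ∂μ + μ.real Ω := by
        rw [integral_add hind.integrableOn hone, setIntegral_const, smul_eq_mul, mul_one]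
    _ ≤ ∫ z, (ball 0 1).indicator (fun v : E => ‖v‖⁻¹ ^ n) (x - z) ∂μ + μ.real Ω := by
        grw [setIntegral_le_integral hind
          (ae_of_all _ fun z => Set.indicator_nonneg (fun v _ => by positivity) _)]
    _ = ∫ v in ball 0 1, ‖v‖⁻¹ ^ n ∂μ + μ.real Ω := by
        rw [integral_sub_left_eq_self _ μ x, integral_indicator measurableSet_ball]

end InversePower

section Potential

variable {f : E → ℂ} {B : ℝ}

lemma integrableOn_mul_helmholtzKernel (hn : 1 < Module.finrank ℝ E) (κ : ℝ)
    (hf : AEStronglyMeasurable f (μ.restrict Ω)) (hfB : ∀ z, ‖f z‖ ≤ B) (hΩ : μ Ω ≠ ⊤)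
    (x : E) : IntegrableOn (fun z => f z * helmholtzKernel κ ‖x - z‖) Ω μ := by
  refine Integrable.mono' ((integrableOn_inv_norm_sub_pow hn hΩ x).const_mul (B * (4 * π)⁻¹))
    (hf.mul ((measurable_helmholtzKernel κ).comp (by fun_prop)).aestronglyMeasurable)
    (ae_of_all _ fun z => ?_)
  rw [norm_mul, norm_helmholtzKernel, abs_norm, pow_one, mul_inv, ← mul_assoc]
  gcongr
  exact hfB z

lemma setIntegral_helmholtzWeight_le (hn : 2 < Module.finrank ℝ E) (hΩ : μ Ω ≠ ⊤) (κ : ℝ)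
    (x y : E) :
    ∫ z in Ω, (|κ| * ‖x - z‖⁻¹ ^ 1 + (‖x - z‖⁻¹ ^ 2 + ‖y - z‖⁻¹ ^ 2) / 2) ∂μ ≤
      |κ| * (∫ v in ball 0 1, ‖v‖⁻¹ ^ 1 ∂μ + μ.real Ω)
        + (∫ v in ball 0 1, ‖v‖⁻¹ ^ 2 ∂μ + μ.real Ω) := by
  have hx₁ := integrableOn_inv_norm_sub_pow (n := 1) (by omega) hΩ x
  have hx₂ := integrableOn_inv_norm_sub_pow hn hΩ x
  have hy₂ := integrableOn_inv_norm_sub_pow hn hΩ y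
  rw [integral_add (hx₁.const_mul |κ|) ((hx₂.fun_add hy₂).div_const 2), integral_const_mul,
    integral_div, integral_add hx₂ hy₂]
  grw [setIntegral_inv_norm_sub_pow_le (by omega) hΩ x, setIntegral_inv_norm_sub_pow_le hn hΩ x,
    setIntegral_inv_norm_sub_pow_le hn hΩ y]
  linarith

lemma norm_setIntegral_mul_helmholtzKernel_sub_le (hn : 2 < Module.finrank ℝ E) (κ : ℝ)
    (hf : AEStronglyMeasurable f (μ.restrict Ω)) (hfB : ∀ z, ‖f z‖ ≤ B) (hΩ : μ Ω ≠ ⊤)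
    (x y : E) :
    ‖∫ z in Ω, f z * helmholtzKernel κ ‖x - z‖ ∂μ - ∫ z in Ω, f z * helmholtzKernel κ ‖y - z‖ ∂μ‖
      ≤ B * (4 * π)⁻¹ * (|κ| * (∫ v in ball 0 1, ‖v‖⁻¹ ^ 1 ∂μ + μ.real Ω)
          + (∫ v in ball 0 1, ‖v‖⁻¹ ^ 2 ∂μ + μ.real Ω)) * ‖x - y‖ := by
  have : Nontrivial E := Module.nontrivial_of_finrank_pos (R := ℝ) (by omega)
  have hB : 0 ≤ B := (norm_nonneg _).trans (hfB 0)
  set w : E → ℝ := fun z => |κ| * ‖x - z‖⁻¹ ^ 1 + (‖x - z‖⁻¹ ^ 2 + ‖y - z‖⁻¹ ^ 2) / 2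
  have hw : IntegrableOn w Ω μ :=
    ((integrableOn_inv_norm_sub_pow (by omega) hΩ x).const_mul |κ|).fun_add
      (((integrableOn_inv_norm_sub_pow hn hΩ x).fun_add
        (integrableOn_inv_norm_sub_pow hn hΩ y)).div_const 2)
  have hpointwise : ∀ᵐ z ∂μ.restrict Ω,
      ‖f z * (helmholtzKernel κ ‖x - z‖ - helmholtzKernel κ ‖y - z‖)‖ ≤
        B * (4 * π)⁻¹ * ‖x - y‖ * w z := by
    filter_upwards [ae_restrict_of_ae (Measure.ae_ne μ x), ae_restrict_of_ae (Measure.ae_ne μ y)]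
      with z hzx hzy
    rw [norm_mul]
    calc ‖f z‖ * ‖helmholtzKernel κ ‖x - z‖ - helmholtzKernel κ ‖y - z‖‖
        ≤ B * ((4 * π)⁻¹ * (|κ| * ‖x - z‖⁻¹ + (‖x - z‖⁻¹ ^ 2 + ‖y - z‖⁻¹ ^ 2) / 2) * ‖x - y‖) :=
          mul_le_mul (hfB z) (norm_helmholtzKernel_sub_le_of_ne κ hzx hzy) (norm_nonneg _) hB
      _ = B * (4 * π)⁻¹ * ‖x - y‖ * w z := by simp only [w]; ring
  rw [← integral_sub (integrableOn_mul_helmholtzKernel (by omega) κ hf hfB hΩ x)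
    (integrableOn_mul_helmholtzKernel (by omega) κ hf hfB hΩ y)]
  simp_rw [← mul_sub]
  calc ‖∫ z in Ω, f z * (helmholtzKernel κ ‖x - z‖ - helmholtzKernel κ ‖y - z‖) ∂μ‖
      ≤ ∫ z in Ω, B * (4 * π)⁻¹ * ‖x - y‖ * w z ∂μ :=
        norm_integral_le_of_norm_le (hw.const_mul _) hpointwise
    _ = B * (4 * π)⁻¹ * ‖x - y‖ * ∫ z in Ω, w z ∂μ := integral_const_mul _ _
    _ ≤ B * (4 * π)⁻¹ * ‖x - y‖ * (|κ| * (∫ v in ball 0 1, ‖v‖⁻¹ ^ 1 ∂μ + μ.real Ω)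
          + (∫ v in ball 0 1, ‖v‖⁻¹ ^ 2 ∂μ + μ.real Ω)) := by
        grw [setIntegral_helmholtzWeight_le hn hΩ κ x y]
    _ = _ := by ring

end Potential

theorem helmholtz_volume_potential_lipschitz_general
    (κ : ℝ)
    (Ω : Set (EuclideanSpace ℝ (Fin 3))) (hΩb : Bornology.IsBounded Ω) :
    ∃ C > (0 : ℝ), ∀ (f : EuclideanSpace ℝ (Fin 3) → ℂ) (B : ℝ),
      Measurable f → (∀ z, ‖f z‖ ≤ B) → (∀ z ∉ Ω, f z = 0) →
      ∀ x y : EuclideanSpace ℝ (Fin 3),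
        ‖(∫ z in Ω, f z * (Complex.exp (Complex.I * (κ : ℂ) * (‖x - z‖ : ℂ)) /
            ((4 * Real.pi * ‖x - z‖ : ℝ) : ℂ)))
          - ∫ z in Ω, f z * (Complex.exp (Complex.I * (κ : ℂ) * (‖y - z‖ : ℂ)) /
            ((4 * Real.pi * ‖y - z‖ : ℝ) : ℂ))‖
          ≤ C * B * ‖x - y‖ := by
  set M : ℕ → ℝ := fun n =>
    (∫ v in ball (0 : EuclideanSpace ℝ (Fin 3)) 1, ‖v‖⁻¹ ^ n) + volume.real Ω
  refine ⟨(4 * π)⁻¹ * (|κ| * M 1 + M 2) + 1, by positivity, fun f B hf hfB _ x y => ?_⟩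
  have hB : 0 ≤ B := (norm_nonneg _).trans (hfB 0)
  calc _ ≤ B * (4 * π)⁻¹ * (|κ| * M 1 + M 2) * ‖x - y‖ :=
        norm_setIntegral_mul_helmholtzKernel_sub_le (μ := volume) (by simp) κ
          hf.aestronglyMeasurable hfB hΩb.measure_lt_top.ne x y
    _ ≤ ((4 * π)⁻¹ * (|κ| * M 1 + M 2) + 1) * B * ‖x - y‖ := by
        nlinarith [mul_nonneg hB (norm_nonneg (x - y))]

/-- Global Lipschitz estimate for the Helmholtz volume potential
`u(x) = ∫_Ω f(z) e^{iκ‖x−z‖}/(4π‖x−z‖) dz` with bounded measurable density `f`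
supported in a bounded measurable set `Ω ⊂ ℝ³`: there is a constant `C` depending only
on `κ` and `Ω` such that `|u(x) − u(y)| ≤ C (sup‖f‖) ‖x−y‖` for all `x, y`. -/
theorem helmholtz_volume_potential_lipschitz
    (κ : ℝ) (hκ : 0 ≤ κ)
    (Ω : Set (EuclideanSpace ℝ (Fin 3))) (hΩb : Bornology.IsBounded Ω)
    (hΩm : MeasurableSet Ω) :
    ∃ C > (0 : ℝ), ∀ (f : EuclideanSpace ℝ (Fin 3) → ℂ) (B : ℝ),
      Measurable f → (∀ z, ‖f z‖ ≤ B) → (∀ z ∉ Ω, f z = 0) →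
      ∀ x y : EuclideanSpace ℝ (Fin 3),
        ‖(∫ z in Ω, f z * (Complex.exp (Complex.I * (κ : ℂ) * (‖x - z‖ : ℂ)) /
            ((4 * Real.pi * ‖x - z‖ : ℝ) : ℂ)))
          - ∫ z in Ω, f z * (Complex.exp (Complex.I * (κ : ℂ) * (‖y - z‖ : ℂ)) /
            ((4 * Real.pi * ‖y - z‖ : ℝ) : ℂ))‖
          ≤ C * B * ‖x - y‖ :=
  helmholtz_volume_potential_lipschitz_general κ Ω hΩb
end
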